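/- arXiv:1909.06869 — 2 statements merged into one kernel-verified Lean document; each statement's English description precedes it below -/
import Mathlib

section
/- Fix δ > 0, α ≥ 0, and real numbers x₀, z₀, x⁺, z⁺. Let f : ℝ → ℝ be a C^∞ probability density supported in (0, δ), and define the input u(t) = (z⁺ − z₀) f(t) − (x⁺ − x₀) f'(t). Let z(t) = z₀ + ∫₀ᵗ u(τ) dτ and let x solve ẋ = −αx − z with x(0) = x₀. Then z(δ) = z⁺, x is bounded on [0, δ], and x(δ) = x⁺ + O(δ), i.e., there exists a constant C (independent of δ for δ ≤ 1, depending on x₀, x⁺, z₀, z⁺, α) with |x(δ) − x⁺| ≤ C δ. -/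
open MeasureTheory intervalIntegral

set_option maxHeartbeats 1600000 in
/-- Cheap control lemma: with a smooth bump-function input one can steer the power
deviation `z` exactly to `z⁺` in time `δ`, while keeping `x` bounded and moving it
to within `O(δ)` of `x⁺`; the constant is independent of `δ ≤ 1`. -/
theorem stmt_2 (α x₀ z₀ xp zp : ℝ) (hα : 0 ≤ α) :
    ∃ C : ℝ, ∀ δ : ℝ, 0 < δ → δ ≤ 1 →
      ∀ f : ℝ → ℝ, ContDiff ℝ (⊤ : ℕ∞) f → (∀ t, 0 ≤ f t) →
        Function.support f ⊆ Set.Ioo 0 δ → (∫ t : ℝ, f t) = 1 →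
      ∀ u z x : ℝ → ℝ,
        (∀ t, u t = (zp - z₀) * f t - (xp - x₀) * deriv f t) →
        (∀ t, z t = z₀ + ∫ τ in (0:ℝ)..t, u τ) →
        x 0 = x₀ →
        (∀ t, HasDerivAt x (-α * x t - z t) t) →
        z δ = zp ∧
        (∃ B : ℝ, ∀ t ∈ Set.Icc (0:ℝ) δ, |x t| ≤ B) ∧
        |x δ - xp| ≤ C * δ := by
  set K₀ : ℝ := |z₀| + |zp - z₀| with hK₀
  set K₁ : ℝ := α * |xp - x₀| + K₀ with hK₁
  set B₀ : ℝ := (|x₀| + K₁) * Real.exp α with hB₀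
  set B : ℝ := B₀ + |xp - x₀| with hB
  have hK₀0 : 0 ≤ K₀ := by positivity
  have hK₁0 : 0 ≤ K₁ := by positivity
  have hB₀0 : 0 ≤ B₀ := by positivity
  have hB0 : 0 ≤ B := by positivity
  clear_value B B₀ K₁ K₀
  refine ⟨α * B + K₀, ?_⟩
  intro δ hδ hδ1 f hf hf0 hsupp hint1 u z x hu hz hx0 hx
  have hfc : Continuous f := hf.continuous
  have hfdc : Continuous (deriv f) := hf.continuous_deriv (by simp)
  have hfint : ∀ a b : ℝ, IntervalIntegrable f volume a b :=
    fun a b => hfc.intervalIntegrable a b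
  have hf00 : f 0 = 0 := by
    by_contra h
    exact absurd (hsupp (Function.mem_support.2 h)).1 (lt_irrefl 0)
  have hfδ0 : f δ = 0 := by
    by_contra h
    exact absurd (hsupp (Function.mem_support.2 h)).2 (lt_irrefl δ)
  set F : ℝ → ℝ := fun t => ∫ τ in (0:ℝ)..t, f τ with hF
  have hFd : ∀ t, HasDerivAt F (f t) t := fun t =>
    integral_hasDerivAt_right (hfint 0 t)
      (hfc.stronglyMeasurableAtFilter _ _) hfc.continuousAt
  have hF0 : F 0 = 0 := integral_same
  -- total mass 1
  have hF1 : F δ = 1 := by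
    have h1 : (∫ t : ℝ, f t) = ∫ t in Set.Ioo 0 δ, f t :=
      (setIntegral_eq_integral_of_forall_compl_eq_zero fun t ht =>
        Function.notMem_support.1 fun hs => ht (hsupp hs)).symm
    have h2 : ∫ t in Set.Ioo 0 δ, f t = ∫ t in Set.Ioc 0 δ, f t :=
      (integral_Ioc_eq_integral_Ioo).symm
    have h3 : F δ = ∫ t in Set.Ioc 0 δ, f t := integral_of_le hδ.le
    rw [h3, ← h2, ← h1, hint1]
  -- F is between 0 and 1 on [0, δ]
  have hFmem : ∀ t ∈ Set.Icc (0:ℝ) δ, 0 ≤ F t ∧ F t ≤ 1 := by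
    intro t ht
    constructor
    · exact intervalIntegral.integral_nonneg ht.1 fun s _ => hf0 s
    · have hsplit : F t + ∫ τ in t..δ, f τ = F δ :=
        integral_add_adjacent_intervals (hfint 0 t) (hfint t δ)
      have h4 : 0 ≤ ∫ τ in t..δ, f τ :=
        intervalIntegral.integral_nonneg ht.2 fun s _ => hf0 s
      linarith [hF1 ▸ hsplit]
  -- formula for z
  have hzF : ∀ t, z t = z₀ + ((zp - z₀) * F t - (xp - x₀) * f t) := by
    intro t
    have hdint : ∀ a b : ℝ, IntervalIntegrable (deriv f) volume a b :=
      fun a b => hfdc.intervalIntegrable a b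
    have hderiv : ∫ τ in (0:ℝ)..t, deriv f τ = f t - f 0 :=
      integral_deriv_eq_sub (fun s _ => (hf.differentiable (by simp)).differentiableAt)
        (hdint 0 t)
    have : (∫ τ in (0:ℝ)..t, u τ)
        = (zp - z₀) * F t - (xp - x₀) * (f t - f 0) := by
      have : (∫ τ in (0:ℝ)..t, u τ)
          = ∫ τ in (0:ℝ)..t, ((zp - z₀) * f τ - (xp - x₀) * deriv f τ) :=
        intervalIntegral.integral_congr fun s _ => hu s
      rw [this, intervalIntegral.integral_sub (((hfint 0 t)).const_mul _)
        ((hdint 0 t).const_mul _), intervalIntegral.integral_const_mul,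
        intervalIntegral.integral_const_mul, hderiv]
    rw [hz t, this, hf00]
    ring
  have hzδ : z δ = zp := by rw [hzF δ, hF1, hfδ0]; ring
  -- the auxiliary function y
  set y : ℝ → ℝ := fun t => x t - (xp - x₀) * F t with hy
  set g : ℝ → ℝ := fun t => -α * x t - z₀ - (zp - z₀) * F t with hg
  have hyd : ∀ t, HasDerivAt y (g t) t := by
    intro t
    have h := (hx t).sub ((hFd t).const_mul (xp - x₀))
    refine h.congr_deriv ?_
    rw [hzF t]; simp only [hg]; ring
  have hy0 : y 0 = x₀ := by simp [hy, hF0, hx0]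
  -- |x t| ≤ |y t| + |xp - x₀| on [0, δ]
  have hxy : ∀ t ∈ Set.Icc (0:ℝ) δ, |x t| ≤ |y t| + |xp - x₀| := by
    intro t ht
    have h1 : x t = y t + (xp - x₀) * F t := by simp only [hy]; ring
    have h2 : |(xp - x₀) * F t| ≤ |xp - x₀| := by
      rw [abs_mul]
      have := hFmem t ht
      nlinarith [abs_nonneg (xp - x₀), abs_of_nonneg this.1]
    calc |x t| ≤ |y t| + |(xp - x₀) * F t| := h1 ▸ abs_add_le _ _
      _ ≤ |y t| + |xp - x₀| := by linarith
  -- bound on g in terms of |x|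
  have hgb : ∀ t ∈ Set.Icc (0:ℝ) δ, |g t| ≤ α * |x t| + K₀ := by
    intro t ht
    have h2 : |(zp - z₀) * F t| ≤ |zp - z₀| := by
      rw [abs_mul]
      have := hFmem t ht
      nlinarith [abs_nonneg (zp - z₀), abs_of_nonneg this.1]
    have : |g t| ≤ |(-α) * x t| + |z₀| + |(zp - z₀) * F t| := by
      simp only [hg]
      calc |(-α * x t - z₀) - (zp - z₀) * F t|
          ≤ |(-α * x t - z₀)| + |(zp - z₀) * F t| := abs_sub _ _
        _ ≤ (|(-α) * x t| + |z₀|) + |(zp - z₀) * F t| := by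
            gcongr; exact abs_sub _ _
    rw [abs_mul, abs_neg, abs_of_nonneg hα] at this
    simp only [hK₀]; linarith
  -- Gronwall bound on y
  have hycont : ContinuousOn y (Set.Icc 0 δ) :=
    (fun t _ => ((hyd t).continuousAt.continuousWithinAt))
  have hGb : ∀ t ∈ Set.Icc (0:ℝ) δ, ‖y t‖ ≤ gronwallBound |x₀| α K₁ (t - 0) := by
    apply norm_le_gronwallBound_of_norm_deriv_right_le hycont
      (fun t _ => (hyd t).hasDerivWithinAt)
    · rw [hy0]; exact le_refl _
    · intro t ht
      have ht' : t ∈ Set.Icc (0:ℝ) δ := ⟨ht.1, ht.2.le⟩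
      have h1 := hgb t ht'
      have h2 := hxy t ht'
      have : α * |x t| ≤ α * (|y t| + |xp - x₀|) := by
        exact mul_le_mul_of_nonneg_left h2 hα
      simp only [Real.norm_eq_abs, hK₁]
      nlinarith
  -- bound gronwallBound on [0,1]
  have hgron : ∀ s ∈ Set.Icc (0:ℝ) 1, gronwallBound |x₀| α K₁ s ≤ B₀ := by
    intro s hs
    rcases eq_or_ne α 0 with h0 | h0
    · rw [h0, gronwallBound_K0]
      simp only [hB₀, h0, Real.exp_zero, mul_one]
      nlinarith [hs.1, hs.2, abs_nonneg x₀]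
    · have hαpos : 0 < α := lt_of_le_of_ne hα (Ne.symm h0)
      rw [gronwallBound_of_K_ne_0 h0]
      have he1 : Real.exp (α * s) ≤ Real.exp α := by
        apply Real.exp_le_exp.2
        nlinarith [hs.1, hs.2]
      have hepos : (0:ℝ) < Real.exp (α * s) := Real.exp_pos _
      -- exp (α s) - 1 ≤ α * s * exp (α s)
      have hkey : Real.exp (α * s) - 1 ≤ α * s * Real.exp (α * s) := by
        have h3 : 1 - α * s ≤ Real.exp (-(α * s)) := by
          have := Real.add_one_le_exp (-(α * s))
          linarith
        have h4 : (1 - α * s) * Real.exp (α * s) ≤ 1 := by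
          calc (1 - α * s) * Real.exp (α * s)
              ≤ Real.exp (-(α * s)) * Real.exp (α * s) := by
                exact mul_le_mul_of_nonneg_right h3 hepos.le
            _ = 1 := by rw [← Real.exp_add]; simp
        have h4' : (1 - α * s) * Real.exp (α * s)
            = Real.exp (α * s) - α * s * Real.exp (α * s) := by ring
        linarith
      have h5 : K₁ / α * (Real.exp (α * s) - 1) ≤ K₁ * (s * Real.exp (α * s)) := by
        rw [div_mul_eq_mul_div, div_le_iff₀ hαpos]
        calc K₁ * (Real.exp (α * s) - 1)
            ≤ K₁ * (α * s * Real.exp (α * s)) :=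
              mul_le_mul_of_nonneg_left hkey hK₁0
          _ = K₁ * (s * Real.exp (α * s)) * α := by ring
      have h6 : s * Real.exp (α * s) ≤ Real.exp α := by
        calc s * Real.exp (α * s) ≤ 1 * Real.exp α := by
              apply mul_le_mul hs.2 he1 hepos.le zero_le_one
          _ = Real.exp α := one_mul _
      have h7 : |x₀| * Real.exp (α * s) ≤ |x₀| * Real.exp α :=
        mul_le_mul_of_nonneg_left he1 (abs_nonneg _)
      have h8 : K₁ * (s * Real.exp (α * s)) ≤ K₁ * Real.exp α :=
        mul_le_mul_of_nonneg_left h6 hK₁0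
      have h9 : (|x₀| + K₁) * Real.exp α = |x₀| * Real.exp α + K₁ * Real.exp α := by
        ring
      simp only [hB₀]
      linarith [h5, h7, h8, h9]
  -- bound on y, then on x
  have hyB : ∀ t ∈ Set.Icc (0:ℝ) δ, |y t| ≤ B₀ := by
    intro t ht
    have h1 := hGb t ht
    rw [Real.norm_eq_abs, sub_zero] at h1
    exact h1.trans (hgron t ⟨ht.1, ht.2.trans hδ1⟩)
  have hxB : ∀ t ∈ Set.Icc (0:ℝ) δ, |x t| ≤ B := by
    intro t ht
    rw [hB]
    calc |x t| ≤ |y t| + |xp - x₀| := hxy t ht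
      _ ≤ B₀ + |xp - x₀| := by linarith [hyB t ht]
  refine ⟨hzδ, ⟨B, hxB⟩, ?_⟩
  -- MVT for y on [0, δ]
  have hgC : ∀ t ∈ Set.Icc (0:ℝ) δ, ‖g t‖ ≤ α * B + K₀ := by
    intro t ht
    rw [Real.norm_eq_abs]
    calc |g t| ≤ α * |x t| + K₀ := hgb t ht
      _ ≤ α * B + K₀ := by nlinarith [hxB t ht]
  have hmvt : ‖y δ - y 0‖ ≤ (α * B + K₀) * ‖δ - 0‖ := by
    apply (convex_Icc (0:ℝ) δ).norm_image_sub_le_of_norm_hasDerivWithin_le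
      (fun t ht => (hyd t).hasDerivWithinAt) hgC
      (Set.left_mem_Icc.2 hδ.le) (Set.right_mem_Icc.2 hδ.le)
  have hyδ : y δ - y 0 = x δ - xp := by
    simp only [hy, hF1, hF0, hx0]; ring
  rw [hyδ, Real.norm_eq_abs, Real.norm_eq_abs, sub_zero, abs_of_pos hδ] at hmvt
  exact hmvt
end

section
/- Let λ : (0, T] → ℝ be C¹ with λ(T) = 0, let α_i > 0 and let c_i be C² strongly convex for i = 1,…,M. Suppose x_i : (0,T] → ℝ satisfies c_i'(x_i(t)) = α_i λ(t) − λ̇(t) for all t and all i. Then each trajectory x_i lies on a curve parameterized by the two scalar functions (λ(t), λ̇(t)): explicitly x_i(t) = (c_i')⁻¹(α_i λ(t) − λ̇(t)). In particular, if M ≥ 3 and α₁ ≠ α₂, then for every t the value x₃(t) is determined by x₁(t) and x₂(t) via x₃(t) = (c₃')⁻¹(α₃ λ(t) − λ̇(t)) where (λ(t), λ̇(t)) is the unique solution of the 2×2 linear system α₁ λ − λ̇ = c₁'(x₁(t)), α₂ λ − λ̇ = c₂'(x₂(t)). -/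
lemma inj_deriv (f : ℝ → ℝ) (hf : ContDiff ℝ 2 f) (μ : ℝ) (hμ : 0 < μ)
    (hs : ∀ x, μ ≤ deriv (deriv f) x) : Function.Injective (deriv f) := by
  have hmono : StrictMono (deriv f) := by
    apply strictMono_of_deriv_pos
    intro x
    exact lt_of_lt_of_le hμ (hs x)
  exact hmono.injective

/-- State space collapse: if the marginal costs satisfy
c_i'(x_i(t)) = α_i λ(t) − λ̇(t), then each SoC trajectory is a function of
(λ(t), λ̇(t)); with three or more classes and α₁ ≠ α₂, the third trajectory is
determined by the first two. -/
theorem stmt_5 (M : ℕ) (hM : 3 ≤ M) (T : ℝ) (hT : 0 < T)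
    (lam : ℝ → ℝ) (hlam : ContDiff ℝ 1 lam) (hlamT : lam T = 0)
    (α : Fin M → ℝ) (hα : ∀ i, 0 < α i)
    (c : Fin M → ℝ → ℝ) (hc : ∀ i, ContDiff ℝ 2 (c i))
    (μ : ℝ) (hμ : 0 < μ) (hstrong : ∀ i x, μ ≤ deriv (deriv (c i)) x)
    (x : Fin M → ℝ → ℝ)
    (hx : ∀ i, ∀ t ∈ Set.Ioc 0 T,
      deriv (c i) (x i t) = α i * lam t - deriv lam t) :
    (∀ i, ∀ t ∈ Set.Ioc 0 T,
      x i t = Function.invFun (deriv (c i)) (α i * lam t - deriv lam t)) ∧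
    (α ⟨0, by omega⟩ ≠ α ⟨1, by omega⟩ →
      ∀ t ∈ Set.Ioc 0 T,
        (∃! p : ℝ × ℝ,
          α ⟨0, by omega⟩ * p.1 - p.2 = deriv (c ⟨0, by omega⟩) (x ⟨0, by omega⟩ t) ∧
          α ⟨1, by omega⟩ * p.1 - p.2 = deriv (c ⟨1, by omega⟩) (x ⟨1, by omega⟩ t)) ∧
        (∀ p : ℝ × ℝ,
          (α ⟨0, by omega⟩ * p.1 - p.2 = deriv (c ⟨0, by omega⟩) (x ⟨0, by omega⟩ t) ∧
           α ⟨1, by omega⟩ * p.1 - p.2 = deriv (c ⟨1, by omega⟩) (x ⟨1, by omega⟩ t)) →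
          x ⟨2, by omega⟩ t =
            Function.invFun (deriv (c ⟨2, by omega⟩)) (α ⟨2, by omega⟩ * p.1 - p.2))) := by
  have hinj : ∀ i, Function.Injective (deriv (c i)) := fun i =>
    inj_deriv (c i) (hc i) μ hμ (hstrong i)
  have hpart1 : ∀ i, ∀ t ∈ Set.Ioc 0 T,
      x i t = Function.invFun (deriv (c i)) (α i * lam t - deriv lam t) := by
    intro i t ht
    rw [← hx i t ht, Function.leftInverse_invFun (hinj i)]
  refine ⟨hpart1, fun hne t ht => ?_⟩
  set i0 : Fin M := ⟨0, by omega⟩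
  set i1 : Fin M := ⟨1, by omega⟩
  set i2 : Fin M := ⟨2, by omega⟩
  have key : ∀ p : ℝ × ℝ,
      (α i0 * p.1 - p.2 = deriv (c i0) (x i0 t) ∧
       α i1 * p.1 - p.2 = deriv (c i1) (x i1 t)) →
      p = (lam t, deriv lam t) := by
    intro p ⟨h0, h1⟩
    rw [hx i0 t ht] at h0
    rw [hx i1 t ht] at h1
    have h2 : (α i0 - α i1) * p.1 = (α i0 - α i1) * lam t := by ring_nf; linarith
    have h3 : p.1 = lam t := by
      have := sub_ne_zero.mpr hne
      exact mul_left_cancel₀ this h2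
    have h4 : p.2 = deriv lam t := by
      rw [h3] at h0; linarith
    exact Prod.ext h3 h4
  constructor
  · refine ⟨(lam t, deriv lam t), ⟨(hx i0 t ht).symm, (hx i1 t ht).symm⟩, fun p hp => key p hp⟩
  · intro p hp
    have := key p hp
    rw [this]
    exact hpart1 i2 t ht
end
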